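/- arXiv:1507.05932 — 2 statements merged into one kernel-verified Lean document; each statement's English description precedes it below -/
import Mathlib

section
/- For real numbers l > 0 and s > 0, the integral ∫₀^∞ e^{-t s²} (4πt)^{-1/2} e^{-l²/(4t)} dt equals e^{-l s} / (2 s). -/
/-!
Substituting `t = u²` turns the integral into `π^(-1/2) ∫₀^∞ exp (-s² u² - (l²/4) / u²) du`.
With `c = l / (2 s)` the exponent is `-s² (u - c/u)² - l s`. The Cauchy–Schlömilch substitution
`v = u - c/u` maps `(0, ∞)` bijectively onto `ℝ` with `dv = (1 + c/u²) du`, and the inversion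
`u ↦ c/u` carries `(c/u²) du` to `du` while flipping the sign of `u - c/u`; hence
`∫₀^∞ g (u - c/u) du = ½ ∫ g` for every even integrable `g`, and the Gaussian integral finishes.
-/

open MeasureTheory Real Set

section

variable {E : Type*} [NormedAddCommGroup E] [NormedSpace ℝ E]

theorem hasDerivAt_const_div {c u : ℝ} (hu : u ≠ 0) :
    HasDerivAt (fun u : ℝ => c / u) (-(c / u ^ 2)) u := by
  simpa [div_eq_mul_inv] using (hasDerivAt_inv hu).const_mul c

theorem hasDerivAt_sub_const_div {c u : ℝ} (hu : u ≠ 0) :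
    HasDerivAt (fun u : ℝ => u - c / u) (1 + c / u ^ 2) u :=
  ((hasDerivAt_id' u).sub (hasDerivAt_const_div hu)).congr_deriv (sub_neg_eq_add _ _)

theorem image_const_div_Ioi_zero {c : ℝ} (hc : 0 < c) :
    (fun u : ℝ => c / u) '' Ioi 0 = Ioi 0 := by
  ext v
  refine ⟨?_, fun hv => ⟨c / v, div_pos hc hv, div_div_cancel₀ hc.ne'⟩⟩
  rintro ⟨u, hu, rfl⟩
  exact div_pos hc hu

theorem const_div_injective {c : ℝ} (hc : c ≠ 0) : Function.Injective fun u : ℝ => c / u := by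
  intro u w h
  simpa only [div_div_cancel₀ hc] using congrArg (c / ·) h

theorem strictMonoOn_sub_const_div {c : ℝ} (hc : 0 < c) :
    StrictMonoOn (fun u : ℝ => u - c / u) (Ioi 0) := fun u hu w _ huw => by
  have : c / w < c / u := div_lt_div_of_pos_left hc hu huw
  dsimp only
  linarith

theorem image_sub_const_div_Ioi_zero {c : ℝ} (hc : 0 < c) :
    (fun u : ℝ => u - c / u) '' Ioi 0 = univ := by
  refine eq_univ_of_forall fun v => ?_
  -- the positive root of `u ^ 2 - v * u - c`
  set r := √(v ^ 2 + 4 * c)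
  have hr : r ^ 2 = v ^ 2 + 4 * c := sq_sqrt (by positivity)
  have hvr : |v| < r := by
    rw [← sqrt_sq_eq_abs]
    exact sqrt_lt_sqrt (sq_nonneg v) (by linarith)
  have hu : 0 < (v + r) / 2 := by linarith [neg_abs_le v]
  refine ⟨(v + r) / 2, hu, ?_⟩
  have hdiv : c / ((v + r) / 2) = (r - v) / 2 := by
    rw [div_eq_iff hu.ne']
    linear_combination -hr / 4
  dsimp only
  rw [hdiv]
  ring

theorem integral_eq_setIntegral_Ioi_smul_comp_sub_div {c : ℝ} (hc : 0 < c) (f : ℝ → E) :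
    ∫ x, f x = ∫ u in Ioi 0, (1 + c / u ^ 2) • f (u - c / u) := by
  rw [← setIntegral_univ, ← image_sub_const_div_Ioi_zero hc,
    integral_image_eq_integral_abs_deriv_smul measurableSet_Ioi
      (fun u hu => (hasDerivAt_sub_const_div (ne_of_gt hu)).hasDerivWithinAt)
      (strictMonoOn_sub_const_div hc).injOn]
  refine setIntegral_congr_fun measurableSet_Ioi fun u _ => ?_
  rw [abs_of_pos (by positivity)]

theorem MeasureTheory.Integrable.integrableOn_Ioi_smul_comp_sub_div {c : ℝ} (hc : 0 < c)
    {f : ℝ → E} (hf : Integrable f) :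
    IntegrableOn (fun u => (1 + c / u ^ 2) • f (u - c / u)) (Ioi 0) := by
  have hf' : IntegrableOn f ((fun u : ℝ => u - c / u) '' Ioi 0) := by
    rwa [image_sub_const_div_Ioi_zero hc, integrableOn_univ]
  rw [integrableOn_image_iff_integrableOn_abs_deriv_smul measurableSet_Ioi
    (fun u hu => (hasDerivAt_sub_const_div (ne_of_gt hu)).hasDerivWithinAt)
    (strictMonoOn_sub_const_div hc).injOn] at hf'
  refine hf'.congr_fun (fun u _ => ?_) measurableSet_Ioi
  dsimp only
  rw [abs_of_pos (by positivity)]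

theorem setIntegral_Ioi_div_sq_smul_comp_const_div {c : ℝ} (hc : 0 < c) (g : ℝ → E) :
    ∫ u in Ioi 0, (c / u ^ 2) • g (c / u) = ∫ u in Ioi 0, g u := by
  conv_rhs => rw [← image_const_div_Ioi_zero hc]
  rw [integral_image_eq_integral_abs_deriv_smul measurableSet_Ioi
    (fun u hu => (hasDerivAt_const_div (ne_of_gt hu)).hasDerivWithinAt)
    (const_div_injective hc.ne').injOn]
  refine setIntegral_congr_fun measurableSet_Ioi fun u _ => ?_
  rw [abs_neg, abs_of_nonneg (by positivity)]

theorem MeasureTheory.Integrable.integrableOn_Ioi_comp_sub_div {c : ℝ} (hc : 0 < c) {f : ℝ → E}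
    (hf : Integrable f) : IntegrableOn (fun u => f (u - c / u)) (Ioi 0) := by
  have hbound : ∀ u : ℝ, ‖(1 + c / u ^ 2)⁻¹‖ ≤ 1 := fun u => by
    have : 1 ≤ 1 + c / u ^ 2 := le_add_of_nonneg_right (by positivity)
    rw [norm_inv, Real.norm_of_nonneg (by linarith)]
    exact inv_le_one_of_one_le₀ this
  have hmeas : Measurable fun u : ℝ => (1 + c / u ^ 2)⁻¹ := by fun_prop
  refine ((hf.integrableOn_Ioi_smul_comp_sub_div hc).bdd_smul 1 hmeas.aestronglyMeasurable
    (ae_of_all _ hbound)).congr (ae_of_all _ fun u => ?_)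
  have : 1 + c / u ^ 2 ≠ 0 := by positivity
  simp only [Pi.smul_apply', smul_smul, inv_mul_cancel₀ this, one_smul]

theorem MeasureTheory.Integrable.integral_eq_setIntegral_Ioi_comp_sub_div_add {c : ℝ} (hc : 0 < c)
    {f : ℝ → E} (hf : Integrable f) :
    ∫ x, f x = (∫ u in Ioi 0, f (u - c / u)) + ∫ u in Ioi 0, f (c / u - u) := by
  have hinv : ∫ u in Ioi 0, f (c / u - u)
      = ∫ u in Ioi 0, ((1 + c / u ^ 2) • f (u - c / u) - f (u - c / u)) := by
    rw [← setIntegral_Ioi_div_sq_smul_comp_const_div hc (fun v => f (c / v - v))]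
    congr 1 with u
    rw [div_div_cancel₀ hc.ne', add_smul, one_smul, add_sub_cancel_left]
  rw [hinv, integral_sub (hf.integrableOn_Ioi_smul_comp_sub_div hc)
      (hf.integrableOn_Ioi_comp_sub_div hc),
    ← integral_eq_setIntegral_Ioi_smul_comp_sub_div hc]
  abel

theorem MeasureTheory.Integrable.setIntegral_Ioi_comp_sub_div_of_even {c : ℝ} (hc : 0 < c)
    {f : ℝ → E} (hf : Integrable f) (heven : ∀ x, f (-x) = f x) :
    ∫ u in Ioi 0, f (u - c / u) = (2 : ℝ)⁻¹ • ∫ x, f x := by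
  have hflip : ∀ u : ℝ, f (c / u - u) = f (u - c / u) := fun u => by
    rw [← heven, neg_sub]
  rw [hf.integral_eq_setIntegral_Ioi_comp_sub_div_add hc, funext hflip, ← two_smul ℝ, smul_smul,
    inv_mul_cancel₀ two_ne_zero, one_smul]

theorem integral_comp_sq_Ioi (g : ℝ → E) :
    ∫ u in Ioi 0, (2 * u) • g (u ^ 2) = ∫ t in Ioi 0, g t := by
  rw [← integral_comp_rpow_Ioi_of_pos (g := g) zero_lt_two]
  refine setIntegral_congr_fun measurableSet_Ioi fun u _ => ?_
  norm_num

end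

theorem integral_Ioi_exp_neg_mul_sq_sub_div_sq {a b : ℝ} (ha : 0 < a) (hb : 0 < b) :
    ∫ u in Ioi 0, exp (-a * u ^ 2 - b / u ^ 2) = √(π / a) / 2 * exp (-2 * √(a * b)) := by
  set c := √(b / a)
  have hc : 0 < c := sqrt_pos.2 (div_pos hb ha)
  have hac : a * c = √(a * b) := by
    rw [show a * b = a ^ 2 * (b / a) by field_simp, sqrt_mul (sq_nonneg a), sqrt_sq ha.le]
  have hac2 : a * c ^ 2 = b := by
    rw [sq_sqrt (div_pos hb ha).le]
    field_simp
  -- completing the square: `a u² + b / u² = a (u - c / u)² + 2 a c`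
  have hsquare : ∀ u ∈ Ioi (0 : ℝ),
      exp (-a * u ^ 2 - b / u ^ 2) = exp (-2 * √(a * b)) * exp (-a * (u - c / u) ^ 2) := by
    intro u hu
    have : u ≠ 0 := ne_of_gt hu
    rw [← exp_add, ← hac, ← hac2]
    congr 1
    field_simp
    ring
  have heven : ∀ x : ℝ, exp (-a * (-x) ^ 2) = exp (-a * x ^ 2) := fun x => by rw [neg_sq]
  rw [setIntegral_congr_fun measurableSet_Ioi hsquare, integral_const_mul,
    (integrable_exp_neg_mul_sq ha).setIntegral_Ioi_comp_sub_div_of_even hc heven,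
    integral_gaussian, smul_eq_mul]
  ring

theorem four_pi_mul_sq_rpow_neg_one_half {u : ℝ} (hu : 0 < u) :
    (4 * π * u ^ 2) ^ (-(1 : ℝ) / 2) = (2 * √π * u)⁻¹ := by
  have hsq : 4 * π * u ^ 2 = (2 * √π * u) ^ 2 := by
    rw [mul_pow, mul_pow, sq_sqrt pi_pos.le]
    ring
  rw [hsq, neg_div, rpow_neg (sq_nonneg _), ← sqrt_eq_rpow, sqrt_sq (by positivity)]

theorem laplace_transform_heat_kernel_one_half (l s : ℝ) (hl : 0 < l) (hs : 0 < s) :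
    ∫ t in Set.Ioi (0:ℝ),
        Real.exp (-t * s ^ 2) * (4 * π * t) ^ (-(1:ℝ)/2) * Real.exp (-l ^ 2 / (4 * t))
      = Real.exp (-l * s) / (2 * s) := by
  have hintegrand : ∀ u ∈ Ioi (0 : ℝ),
      (2 * u) • (exp (-u ^ 2 * s ^ 2) * (4 * π * u ^ 2) ^ (-(1 : ℝ) / 2) *
        exp (-l ^ 2 / (4 * u ^ 2)))
      = (√π)⁻¹ * exp (-s ^ 2 * u ^ 2 - l ^ 2 / 4 / u ^ 2) := by
    intro u hu
    have hu0 : u ≠ 0 := ne_of_gt hu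
    have hπ : 0 < √π := sqrt_pos.2 pi_pos
    rw [four_pi_mul_sq_rpow_neg_one_half hu, smul_eq_mul, sub_eq_add_neg, exp_add]
    field_simp
  rw [← integral_comp_sq_Ioi, setIntegral_congr_fun measurableSet_Ioi hintegrand,
    integral_const_mul, integral_Ioi_exp_neg_mul_sq_sub_div_sq (by positivity) (by positivity),
    sqrt_div pi_pos.le, sqrt_sq hs.le,
    show s ^ 2 * (l ^ 2 / 4) = (l * s / 2) ^ 2 by ring, sqrt_sq (by positivity)]
  field_simp
end

section
/- Let s₁, …, s_N ∈ ℂ be pairwise distinct with s_i² ≠ s_j² for all i ≠ j. Then as t → 0⁺, the function ∑_{i=1}^N (∏_{j≠i} 1/(s_j² − s_i²)) e^{-t s_i²} is O(t^{N−1}). -/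
/-! With `x i = s i ^ 2`, the coefficients `c i = ∏_{j ≠ i} (x j - x i)⁻¹` are, up to sign, the
divided-difference weights at the distinct nodes `x i`, so `∑ i, c i * x i ^ k = 0` for
`k < N - 1`: it is the coefficient of `X ^ (N - 1)` in the Lagrange interpolant of `X ^ k`.
Hence subtracting from each `exp (-t x i)` its Taylor polynomial of degree `N - 2` does not change
the sum, and each remainder is `O(t ^ (N - 1))`. -/

open Asymptotics Finset Topology Polynomial

namespace Lagrange

variable {F ι : Type*} [Field F] [DecidableEq ι] {s : Finset ι} {v : ι → F}

theorem sum_prod_inv_sub_mul_pow_eq_zero (hvs : Set.InjOn v s) {k : ℕ} (hk : k + 1 < #s) :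
    ∑ i ∈ s, (∏ j ∈ s.erase i, (v j - v i)⁻¹) * v i ^ k = 0 := by
  have hcoeff := coeff_eq_sum hvs (P := X ^ k) (by rw [degree_X_pow]; exact_mod_cast by omega)
  rw [coeff_X_pow, if_neg (by omega)] at hcoeff
  simp only [eval_pow, eval_X] at hcoeff
  calc ∑ i ∈ s, (∏ j ∈ s.erase i, (v j - v i)⁻¹) * v i ^ k
      = (-1) ^ (#s - 1) * ∑ i ∈ s, v i ^ k / ∏ j ∈ s.erase i, (v i - v j) := by
        rw [mul_sum]
        refine sum_congr rfl fun i hi => ?_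
        simp_rw [prod_inv_distrib, ← neg_sub (v i), prod_neg, card_erase_of_mem hi]
        rw [mul_inv, ← inv_pow, inv_neg_one]
        ring
    _ = 0 := by rw [← hcoeff, mul_zero]

end Lagrange

theorem sum_mul_sum_range_eq_zero {R ι : Type*} [CommRing R] {s : Finset ι} {c x : ι → R}
    {n : ℕ} (h : ∀ k < n, ∑ i ∈ s, c i * x i ^ k = 0) (a : ℕ → R) :
    ∑ i ∈ s, c i * ∑ k ∈ range n, a k * x i ^ k = 0 := by
  simp_rw [mul_sum, mul_left_comm (c _)]
  rw [sum_comm]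
  exact sum_eq_zero fun k hk => by rw [← mul_sum, h k (mem_range.mp hk), mul_zero]

theorem Complex.exp_mul_sub_sum_range_isBigO_pow (c : ℂ) (n : ℕ) :
    (fun t : ℝ => exp (t * c) - ∑ k ∈ range n, (t * c) ^ k / k.factorial)
      =O[𝓝 0] fun t => t ^ n := by
  have hlim : Filter.Tendsto (fun t : ℝ => (t : ℂ) * c) (𝓝 0) (𝓝 0) := by
    have hcont : Continuous fun t : ℝ => (t : ℂ) * c := by fun_prop
    simpa using hcont.tendsto 0
  refine ((exp_sub_sum_range_isBigO_pow n).comp_tendsto hlim).trans ?_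
  refine IsBigO.of_bound (‖c‖ ^ n) (Filter.Eventually.of_forall fun t => ?_)
  simp [mul_pow, mul_comm]

theorem partial_fraction_kernel_isBigO_pow_general
    (N : ℕ) (s : Fin N → ℂ)
    (hs2 : ∀ i j, i ≠ j → s i ^ 2 ≠ s j ^ 2) :
    (fun t : ℝ => ∑ i, (∏ j ∈ Finset.univ.erase i, (s j ^ 2 - s i ^ 2)⁻¹) *
        Complex.exp (-(t:ℂ) * s i ^ 2))
      =O[𝓝[>] (0:ℝ)] fun t : ℝ => t ^ (N - 1) := by
  set c : Fin N → ℂ := fun i => ∏ j ∈ univ.erase i, (s j ^ 2 - s i ^ 2)⁻¹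
  have hinj : Set.InjOn (fun i => s i ^ 2) (univ : Finset (Fin N)) :=
    fun i _ j _ h => by_contra (hs2 i j · h)
  have hmoments : ∀ k < N - 1, ∑ i, c i * (s i ^ 2) ^ k = 0 := fun k hk =>
    Lagrange.sum_prod_inv_sub_mul_pow_eq_zero hinj (by rw [card_univ, Fintype.card_fin]; omega)
  have hremainder : ∀ i, (fun t : ℝ => c i * (Complex.exp (t * -s i ^ 2) -
      ∑ k ∈ range (N - 1), (t * -s i ^ 2) ^ k / k.factorial)) =O[𝓝 0] fun t => t ^ (N - 1) :=
    fun i => (Complex.exp_mul_sub_sum_range_isBigO_pow _ _).const_mul_left _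
  have htaylor : ∀ t : ℝ, ∑ i, c i * ∑ k ∈ range (N - 1),
      ((t : ℂ) * -s i ^ 2) ^ k / k.factorial = 0 := fun t => by
    rw [← sum_mul_sum_range_eq_zero hmoments fun k => (-t : ℂ) ^ k / k.factorial]
    refine sum_congr rfl fun i _ => congrArg _ (sum_congr rfl fun k _ => ?_)
    ring
  refine ((IsBigO.fun_sum (s := univ) fun i _ => hremainder i).mono nhdsWithin_le_nhds).congr_left
    fun t => ?_
  simp only [mul_sub, sum_sub_distrib, htaylor, sub_zero, neg_mul_comm]
  rfl

theorem partial_fraction_kernel_isBigO_pow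
    (N : ℕ) (hN : 1 ≤ N) (s : Fin N → ℂ)
    (hs : ∀ i j, i ≠ j → s i ≠ s j)
    (hs2 : ∀ i j, i ≠ j → s i ^ 2 ≠ s j ^ 2) :
    (fun t : ℝ => ∑ i, (∏ j ∈ Finset.univ.erase i, (s j ^ 2 - s i ^ 2)⁻¹) *
        Complex.exp (-(t:ℂ) * s i ^ 2))
      =O[𝓝[>] (0:ℝ)] fun t : ℝ => t ^ (N - 1) :=
  partial_fraction_kernel_isBigO_pow_general N s hs2
end
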